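/- Let n ≥ 1, X and Y Borel spaces with Y separable, and f : X → Y, T : X → X Borel. If the T-period-n part of f is empty, then the graph of T^n is separable, i.e., there is a countable family of Borel sets separating any pair (x, T^n x) with x ≠ T^n x. -/
import Mathlib


/-- A countable family of measurable sets separating `R`-related points. -/
def SeparatesRel {X : Type*} [MeasurableSpace X] (R : X → X → Prop) : Prop :=
  ∃ B : ℕ → Set X, (∀ i, MeasurableSet (B i)) ∧
    ∀ x y, x ≠ y → R x y → ∃ i, x ∈ B i ∧ y ∉ B i

def InPeriodPart {X Y : Type*} (T : X → X) (f : X → Y) (n : ℕ) (x : X) : Prop :=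
  ∀ k : ℕ, f (T^[k] x) = f (T^[n] (T^[k] x))

theorem graph_separable_of_empty_period_part {X Y : Type*}
    [MeasurableSpace X] [MeasurableSpace Y]
    (hY : SeparatesRel (fun (y z : Y) => True))
    (n : ℕ) (hn : 1 ≤ n) (f : X → Y) (T : X → X)
    (hf : Measurable f) (hT : Measurable T)
    (hper : ∀ x : X, ¬ InPeriodPart T f n x) :
    SeparatesRel (fun (x y : X) => y = T^[n] x) := by
  obtain ⟨B, hBmeas, hBsep⟩ := hY
  refine ⟨fun m => T^[(Nat.unpair m).1] ⁻¹' (f ⁻¹' (B (Nat.unpair m).2)),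
    fun m => ((hBmeas _).preimage hf).preimage (hT.iterate _), ?_⟩
  rintro x y hxy rfl
  obtain ⟨k, hk⟩ := not_forall.mp (hper x)
  obtain ⟨i, hi1, hi2⟩ := hBsep _ _ hk trivial
  refine ⟨Nat.pair k i, ?_, ?_⟩
  · simpa [Nat.unpair_pair] using hi1
  · simp only [Nat.unpair_pair, Set.mem_preimage]
    rw [← Function.iterate_add_apply, Nat.add_comm, Function.iterate_add_apply]
    exact hi2
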